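/- arXiv:1007.3658 — 2 statements merged into one kernel-verified Lean document; each statement's English description precedes it below -/
import Mathlib

section
/- Let D be a degree-1 ℝ-linear operator on C(G;E) satisfying the Leibniz rule. Then for every g ∈ G the formula Δ_g(ε_{s(g)}) := (Dε)(g) + ε_{t(g)} well-defines a linear map Δ_g : E_{s(g)} → E_{t(g)}; that is, if ε, ε′ ∈ Γ(E) satisfy ε_{s(g)} = ε′_{s(g)} then (Dε)(g) + ε_{t(g)} = (Dε′)(g) + ε′_{t(g)}, and the resulting map Δ_g is linear. -/
attribute [local instance] Classical.propDecidable

/-- A set-theoretic groupoid with arrow set `G` and object set `M`.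
Multiplication `mul g₁ g₂` is meaningful when `src g₁ = tgt g₂`. -/
structure SetGroupoid (G M : Type) where
  src : G → M
  tgt : G → M
  mul : G → G → G
  unit : M → G
  inv : G → G
  src_mul : ∀ g₁ g₂, src g₁ = tgt g₂ → src (mul g₁ g₂) = src g₂
  tgt_mul : ∀ g₁ g₂, src g₁ = tgt g₂ → tgt (mul g₁ g₂) = tgt g₁
  mul_assoc : ∀ g₁ g₂ g₃, src g₁ = tgt g₂ → src g₂ = tgt g₃ →
      mul (mul g₁ g₂) g₃ = mul g₁ (mul g₂ g₃)
  src_unit : ∀ x, src (unit x) = x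
  tgt_unit : ∀ x, tgt (unit x) = x
  unit_mul : ∀ g, mul (unit (tgt g)) g = g
  mul_unit : ∀ g, mul g (unit (src g)) = g
  src_inv : ∀ g, src (inv g) = tgt g
  tgt_inv : ∀ g, tgt (inv g) = src g
  mul_inv : ∀ g, mul g (inv g) = unit (tgt g)
  inv_mul : ∀ g, mul (inv g) g = unit (src g)

/-- Transport an element of a family of types along an equality of indices. -/
def fcst {α : Type} (F : α → Type) {a b : α} (h : a = b) (v : F a) : F b := h ▸ v

/-- Transport as a linear map, for a family of real vector spaces. -/
def lcast {α : Type} (F : α → Type) [∀ a, AddCommGroup (F a)] [∀ a, Module ℝ (F a)]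
    {a b : α} (h : a = b) : F a →ₗ[ℝ] F b where
  toFun := fcst F h
  map_add' := by subst h; intro u v; rfl
  map_smul' := by subst h; intro r v; rfl

theorem fcst_fcst {α : Type} (F : α → Type) {a b : α} (h : a = b) (v : F a) :
    fcst F h.symm (fcst F h v) = v := by cases h; rfl

namespace SetGroupoid

variable {G M : Type} (𝒢 : SetGroupoid G M)

/-- `v : Fin p → G` is a composable string: `s(gᵢ) = t(gᵢ₊₁)`. -/
def IsComposable (p : ℕ) (v : Fin p → G) : Prop :=
  ∀ (i : ℕ) (h : i + 1 < p), 𝒢.src (v ⟨i, by omega⟩) = 𝒢.tgt (v ⟨i + 1, h⟩)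

/-- An anchored point: a point of `M` together with a composable string whose
first target is the anchor (for `p = 0` this is just a point of `M`). -/
def IsAnchored (p : ℕ) (z : M × (Fin p → G)) : Prop :=
  𝒢.IsComposable p z.2 ∧ ∀ h : 0 < p, 𝒢.tgt (z.2 ⟨0, h⟩) = z.1

/-- The space `G⁽ᵖ⁾` of composable `p`-strings (anchored at the target of the
first arrow; for `p = 0` this is `M`). -/
abbrev APt (p : ℕ) := { z : M × (Fin p → G) // 𝒢.IsAnchored p z }

/-- Real-valued smooth-groupoid `p`-cochains `C^p(G)`. -/
abbrev Cochain (p : ℕ) := 𝒢.APt p → ℝ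

/-- `E`-valued groupoid `p`-cochains `C^p(G;E)`; the value on `(g₁,…,g_p)` lies
in the fiber over `t(g₁)` (over the anchor). -/
abbrev ECochain (E : M → Type) (p : ℕ) := ∀ z : 𝒢.APt p, E z.1.1

/-- Extension of a real cochain by `0` to arbitrary (possibly non-composable) strings. -/
noncomputable def extC (p : ℕ) (f : 𝒢.Cochain p) : M × (Fin p → G) → ℝ :=
  fun z => if h : 𝒢.IsAnchored p z then f ⟨z, h⟩ else 0

/-- Extension of a vector-valued cochain by `0`. -/
noncomputable def extE (E : M → Type) [∀ x, AddCommGroup (E x)] [∀ x, Module ℝ (E x)]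
    (p : ℕ) (ω : 𝒢.ECochain E p) : ∀ z : M × (Fin p → G), E z.1 :=
  fun z => if h : 𝒢.IsAnchored p z then ω ⟨z, h⟩ else 0

/-- The `j`-th simplicial face of a `(p+1)`-string (as a raw tuple):
`j = 0` drops the first arrow, `j = p+1` drops the last one,
`0 < j < p+1` multiplies `g_{j-1}g_j`. -/
def faceTuple (p : ℕ) (v : Fin (p+1) → G) (j : Fin (p+2)) : Fin p → G :=
  fun i =>
    if i.1 + 1 < j.1 then v ⟨i.1, by have := i.isLt; omega⟩
    else if i.1 + 1 = j.1 then
      𝒢.mul (v ⟨i.1, by have := i.isLt; omega⟩) (v ⟨i.1 + 1, by have := i.isLt; omega⟩)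
    else v ⟨i.1 + 1, by have := i.isLt; omega⟩

/-- The simplicial coboundary operator `δ : C^p(G) → C^{p+1}(G)`. -/
noncomputable def delta (p : ℕ) (f : 𝒢.Cochain p) : 𝒢.Cochain (p+1) :=
  fun z => ∑ j : Fin (p+2), (-1 : ℝ) ^ (j : ℕ) *
    𝒢.extC p f
      (if j.1 = 0 then 𝒢.src (z.1.2 ⟨0, Nat.succ_pos p⟩) else z.1.1,
       𝒢.faceTuple p z.1.2 j)

/-- `g` is a unit arrow. -/
def IsUnitArrow (g : G) : Prop := ∃ x, g = 𝒢.unit x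

/-- A real cochain is normalized if it vanishes whenever one of its arguments is a unit. -/
def IsNormalizedC (p : ℕ) (f : 𝒢.Cochain p) : Prop :=
  ∀ z : 𝒢.APt p, (∃ i : Fin p, 𝒢.IsUnitArrow (z.1.2 i)) → f z = 0

/-- A vector-valued cochain is normalized if it vanishes whenever one of its
arguments is a unit. -/
def IsNormalizedE (E : M → Type) [∀ x, AddCommGroup (E x)] [∀ x, Module ℝ (E x)]
    (p : ℕ) (ω : 𝒢.ECochain E p) : Prop :=
  ∀ z : 𝒢.APt p, (∃ i : Fin p, 𝒢.IsUnitArrow (z.1.2 i)) → ω z = 0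

/-- The anchor of the tail-part of a splitting of a string after its first `p`
arrows: `s(g_p)` (or the anchor itself when `p = 0`). -/
def endAnchor (p : ℕ) (z : M × (Fin p → G)) : M :=
  if hp : 0 < p then 𝒢.src (z.2 ⟨p - 1, by omega⟩) else z.1

/-- The product `f₁ ⋆ f₂` of real cochains. -/
noncomputable def starC (p q : ℕ) (f₁ : 𝒢.Cochain p) (f₂ : 𝒢.Cochain q) : 𝒢.Cochain (p+q) :=
  fun z =>
    𝒢.extC p f₁ (z.1.1, fun i => z.1.2 ⟨i.1, by have := i.isLt; omega⟩) *
    𝒢.extC q f₂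
      (𝒢.endAnchor p (z.1.1, fun i => z.1.2 ⟨i.1, by have := i.isLt; omega⟩),
       fun i => z.1.2 ⟨p + i.1, by have := i.isLt; omega⟩)

/-- The right `C(G)`-module structure `ω ⋆ f` on vector-valued cochains. -/
noncomputable def starE (E : M → Type) [∀ x, AddCommGroup (E x)] [∀ x, Module ℝ (E x)]
    (p q : ℕ) (ω : 𝒢.ECochain E p) (f : 𝒢.Cochain q) : 𝒢.ECochain E (p+q) :=
  fun z =>
    𝒢.extC q f
      (𝒢.endAnchor p (z.1.1, fun i => z.1.2 ⟨i.1, by have := i.isLt; omega⟩),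
       fun i => z.1.2 ⟨p + i.1, by have := i.isLt; omega⟩) •
    𝒢.extE E p ω (z.1.1, fun i => z.1.2 ⟨i.1, by have := i.isLt; omega⟩)

/-- Reindexing of anchored points along an equality of degrees. -/
@[reducible] def recastPt {a b : ℕ} (h : a = b) (z : 𝒢.APt a) : 𝒢.APt b :=
  ⟨(z.1.1, fun i => z.1.2 (Fin.cast h.symm i)), by subst h; exact z.2⟩

/-- Reindexing of vector-valued cochains along an equality of degrees. -/
@[reducible] def recastE (E : M → Type) {a b : ℕ} (h : a = b) (ω : 𝒢.ECochain E a) : 𝒢.ECochain E b :=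
  fun z => ω (𝒢.recastPt h.symm z)

/-- The anchored point of degree `0` at `x : M`. -/
@[reducible] def pt0 (x : M) : 𝒢.APt 0 :=
  ⟨(x, fun i => i.elim0), by exact ⟨fun i h => by omega, fun h => by omega⟩⟩

/-- The anchored point of degree `1` given by a single arrow `g`. -/
@[reducible] def pt1 (g : G) : 𝒢.APt 1 :=
  ⟨(𝒢.tgt g, fun _ => g), by exact ⟨fun i h => by omega, fun h => rfl⟩⟩

/-- The anchored point of degree `2` given by a composable pair `(g₁, g₂)`. -/
@[reducible] def pt2 (g₁ g₂ : G) (h : 𝒢.src g₁ = 𝒢.tgt g₂) : 𝒢.APt 2 :=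
  ⟨(𝒢.tgt g₁, fun i => if i.1 = 0 then g₁ else g₂), by
    refine ⟨fun i hi => ?_, fun h0 => rfl⟩
    have hi0 : i = 0 := by omega
    subst hi0
    simpa using h⟩

end SetGroupoid
namespace SetGroupoid
variable {G M : Type} (𝒢 : SetGroupoid G M)

/-- A degree-1 operator on `C(G;E)` satisfies the graded Leibniz rule. -/
def IsLeibnizOp (E : M → Type) [∀ x, AddCommGroup (E x)] [∀ x, Module ℝ (E x)]
    (D : ∀ p, 𝒢.ECochain E p → 𝒢.ECochain E (p+1)) : Prop :=
  ∀ (p q : ℕ) (ω : 𝒢.ECochain E p) (f : 𝒢.Cochain q),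
    D (p+q) (𝒢.starE E p q ω f) =
      𝒢.recastE E (by omega : (p+1)+q = p+q+1) (𝒢.starE E (p+1) q (D p ω) f) +
        ((-1 : ℝ) ^ p) • 𝒢.recastE E (by omega : p+(q+1) = p+q+1) (𝒢.starE E p (q+1) ω (𝒢.delta q f))

/-- Finitely many sections of `E` span every fiber. -/
def HasSpanningSections (E : M → Type) [∀ x, AddCommGroup (E x)] [∀ x, Module ℝ (E x)] : Prop :=
  ∃ (n : ℕ) (εs : Fin n → ∀ x, E x),
    ∀ x, Submodule.span ℝ (Set.range fun i => εs i x) = ⊤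

end SetGroupoid
namespace SetGroupoid
variable {G M : Type} (𝒢 : SetGroupoid G M)

/-- A quasi-action of `G` on the family `F`: a linear map `F_{s(g)} → F_{t(g)}`
for every arrow `g`. -/
abbrev QAct (F : M → Type) [∀ x, AddCommGroup (F x)] [∀ x, Module ℝ (F x)] :=
  ∀ g : G, F (𝒢.src g) →ₗ[ℝ] F (𝒢.tgt g)

/-- A quasi-action is unital if `Δ_{1_x} = id` (modulo the canonical identifications). -/
def IsUnitalQ (F : M → Type) [∀ x, AddCommGroup (F x)] [∀ x, Module ℝ (F x)]
    (Δ : 𝒢.QAct F) : Prop :=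
  ∀ (x : M) (e : F (𝒢.src (𝒢.unit x))),
    Δ (𝒢.unit x) e = fcst F ((𝒢.src_unit x).trans (𝒢.tgt_unit x).symm) e

/-- A quasi-action is flat if `Δ_{g₁} Δ_{g₂} = Δ_{g₁ g₂}` on composable pairs. -/
def IsFlatQ (F : M → Type) [∀ x, AddCommGroup (F x)] [∀ x, Module ℝ (F x)]
    (Δ : 𝒢.QAct F) : Prop :=
  ∀ (g₁ g₂ : G) (h : 𝒢.src g₁ = 𝒢.tgt g₂),
    Δ g₁ ∘ₗ lcast F h.symm ∘ₗ Δ g₂ =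
      lcast F (𝒢.tgt_mul g₁ g₂ h) ∘ₗ Δ (𝒢.mul g₁ g₂) ∘ₗ lcast F (𝒢.src_mul g₁ g₂ h).symm

end SetGroupoid
namespace SetGroupoid
variable {G M : Type} (𝒢 : SetGroupoid G M)

/-- The simplicial degree-1 operator on `C(G;F)` associated to a quasi-action:
`(Dω)(g₀,…,g_p) = Δ_{g₀} ω(g₁,…,g_p) + Σ_{i=1}^p (-1)^i ω(g₀,…,g_{i-1}g_i,…,g_p)
 + (-1)^{p+1} ω(g₀,…,g_{p-1})`. -/
noncomputable def simpD (F : M → Type) [∀ x, AddCommGroup (F x)] [∀ x, Module ℝ (F x)]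
    (Δ : 𝒢.QAct F) (p : ℕ) (ω : 𝒢.ECochain F p) : 𝒢.ECochain F (p+1) :=
  fun z =>
    fcst F (z.2.2 (Nat.succ_pos p))
      (Δ (z.1.2 ⟨0, Nat.succ_pos p⟩)
        (𝒢.extE F p ω
          (𝒢.src (z.1.2 ⟨0, Nat.succ_pos p⟩),
           fun i => z.1.2 ⟨i.1 + 1, by have := i.isLt; omega⟩)))
    + ∑ j : Fin (p+1), (-1 : ℝ) ^ (j.1 + 1) •
        𝒢.extE F p ω (z.1.1, 𝒢.faceTuple p z.1.2 j.succ)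

end SetGroupoid
namespace SetGroupoid
variable {G M : Type} (𝒢 : SetGroupoid G M)

theorem my_fcst_add {α : Type} (F : α → Type) [∀ a, AddCommGroup (F a)] {a b : α} (h : a = b)
    (u v : F a) : fcst F h (u + v) = fcst F h u + fcst F h v := by subst h; rfl

theorem my_fcst_smul {α : Type} (F : α → Type) [∀ a, AddCommGroup (F a)] [∀ a, Module ℝ (F a)]
    {a b : α} (h : a = b) (r : ℝ) (v : F a) : fcst F h (r • v) = r • fcst F h v := by
  subst h; rfl

theorem my_anch0 (x : M) (t : Fin 0 → G) : 𝒢.IsAnchored 0 (x, t) :=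
  ⟨fun i h => by omega, fun h => by omega⟩

theorem my_extC0_eq (f : 𝒢.Cochain 0) (x : M) (t : Fin 0 → G) :
    𝒢.extC 0 f (x, t) = f (𝒢.pt0 x) := by
  have ht : t = fun i : Fin 0 => i.elim0 := funext fun i => i.elim0
  subst ht
  simp only [extC]
  rw [dif_pos (𝒢.my_anch0 x _)]

theorem my_extE0_eq (E : M → Type) [∀ x, AddCommGroup (E x)] [∀ x, Module ℝ (E x)]
    (ω : 𝒢.ECochain E 0) (x : M) (t : Fin 0 → G) :
    𝒢.extE E 0 ω (x, t) = ω (𝒢.pt0 x) := by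
  have ht : t = fun i : Fin 0 => i.elim0 := funext fun i => i.elim0
  subst ht
  simp only [extE]
  rw [dif_pos (𝒢.my_anch0 x _)]

theorem my_extC1_eq (f : 𝒢.Cochain 1) (g : G) (t : Fin 1 → G) (ht : ∀ i, t i = g) :
    𝒢.extC 1 f (𝒢.tgt g, t) = f (𝒢.pt1 g) := by
  have ht' : t = fun _ : Fin 1 => g := funext fun i => ht i
  subst ht'
  simp only [extC]
  rw [dif_pos (𝒢.pt1 g).2]

theorem my_extE1_eq (E : M → Type) [∀ x, AddCommGroup (E x)] [∀ x, Module ℝ (E x)]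
    (ω : 𝒢.ECochain E 1) (g : G) (t : Fin 1 → G) (ht : ∀ i, t i = g) :
    𝒢.extE E 1 ω (𝒢.tgt g, t) = ω (𝒢.pt1 g) := by
  have ht' : t = fun _ : Fin 1 => g := funext fun i => ht i
  subst ht'
  simp only [extE]
  rw [dif_pos (𝒢.pt1 g).2]

theorem my_delta0_pt1 (f : 𝒢.Cochain 0) (g : G) :
    𝒢.delta 0 f (𝒢.pt1 g) = f (𝒢.pt0 (𝒢.src g)) - f (𝒢.pt0 (𝒢.tgt g)) := by
  simp only [delta]
  rw [Fin.sum_univ_two]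
  simp [𝒢.my_extC0_eq]
  ring

theorem my_starE00 (E : M → Type) [∀ x, AddCommGroup (E x)] [∀ x, Module ℝ (E x)]
    (ω : 𝒢.ECochain E 0) (f : 𝒢.Cochain 0) (x : M) :
    𝒢.starE E 0 0 ω f (𝒢.pt0 x) = f (𝒢.pt0 x) • ω (𝒢.pt0 x) := by
  simp only [starE, endAnchor]
  rw [dif_neg (by omega)]
  rw [𝒢.my_extC0_eq, 𝒢.my_extE0_eq]

theorem my_key (E : M → Type) [∀ x, AddCommGroup (E x)] [∀ x, Module ℝ (E x)]
    (D : ∀ p, 𝒢.ECochain E p → 𝒢.ECochain E (p+1))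
    (hleib : 𝒢.IsLeibnizOp E D) (g : G) (ω : 𝒢.ECochain E 0) (f : 𝒢.Cochain 0) :
    D 0 (𝒢.starE E 0 0 ω f) (𝒢.pt1 g) =
      f (𝒢.pt0 (𝒢.src g)) • D 0 ω (𝒢.pt1 g)
        + (f (𝒢.pt0 (𝒢.src g)) - f (𝒢.pt0 (𝒢.tgt g))) • ω (𝒢.pt0 (𝒢.tgt g)) := by
  have h := congrFun (hleib 0 0 ω f) (𝒢.pt1 g)
  rw [h]
  have h1 : 𝒢.starE E (0+1) 0 (D 0 ω) f (𝒢.pt1 g)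
      = f (𝒢.pt0 (𝒢.src g)) • D 0 ω (𝒢.pt1 g) := by
    simp only [starE, endAnchor]
    rw [dif_pos (by omega : (0:ℕ) < 0 + 1)]
    rw [𝒢.my_extC0_eq]
    have h2 : 𝒢.extE E 1 (D 0 ω)
        ((𝒢.pt1 g).1.1, fun i : Fin (0+1) => (𝒢.pt1 g).1.2 ⟨i.1, by omega⟩)
        = D 0 ω (𝒢.pt1 g) := 𝒢.my_extE1_eq E (D 0 ω) g _ (fun i => rfl)
    show f (𝒢.pt0 (𝒢.src g)) • 𝒢.extE E 1 (D 0 ω) (𝒢.tgt g, fun _ : Fin 1 => g)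
        = f (𝒢.pt0 (𝒢.src g)) • D 0 ω (𝒢.pt1 g)
    rw [𝒢.my_extE1_eq E (D 0 ω) g _ (fun i => rfl)]
  have h3 : 𝒢.starE E 0 (0+1) ω (𝒢.delta 0 f) (𝒢.pt1 g)
      = (f (𝒢.pt0 (𝒢.src g)) - f (𝒢.pt0 (𝒢.tgt g))) • ω (𝒢.pt0 (𝒢.tgt g)) := by
    simp only [starE, endAnchor]
    rw [dif_neg (by omega : ¬ (0:ℕ) < 0)]
    have h4 : 𝒢.extC (0+1) (𝒢.delta 0 f)
        ((𝒢.pt1 g).1.1, fun i : Fin (0+1) => (𝒢.pt1 g).1.2 ⟨0 + i.1, by omega⟩)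
        = 𝒢.delta 0 f (𝒢.pt1 g) := 𝒢.my_extC1_eq (𝒢.delta 0 f) g _ (fun i => rfl)
    rw [h4, 𝒢.my_extE0_eq, 𝒢.my_delta0_pt1]
  show 𝒢.starE E (0+1) 0 (D 0 ω) f (𝒢.pt1 g)
      + (-1 : ℝ) ^ 0 • 𝒢.starE E 0 (0+1) ω (𝒢.delta 0 f) (𝒢.pt1 g) = _
  rw [h1, h3]
  simp

theorem my_vanish (E : M → Type) [∀ x, AddCommGroup (E x)] [∀ x, Module ℝ (E x)]
    (D : ∀ p, 𝒢.ECochain E p → 𝒢.ECochain E (p+1))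
    (hleib : 𝒢.IsLeibnizOp E D) (g : G) (ε : 𝒢.ECochain E 0)
    (hε : ε (𝒢.pt0 (𝒢.src g)) = 0) :
    D 0 ε (𝒢.pt1 g) + ε (𝒢.pt0 (𝒢.tgt g)) = 0 := by
  classical
  set f : 𝒢.Cochain 0 := fun z => if z.1.1 = 𝒢.src g then 0 else 1 with hf
  have hst : 𝒢.starE E 0 0 ε f = ε := by
    funext z
    obtain ⟨⟨x, t⟩, hz⟩ := z
    have ht : t = fun i : Fin 0 => i.elim0 := funext fun i => i.elim0
    subst ht
    show 𝒢.starE E 0 0 ε f (𝒢.pt0 x) = ε (𝒢.pt0 x)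
    rw [𝒢.my_starE00]
    by_cases hx : x = 𝒢.src g
    · subst hx
      rw [hε, smul_zero]
    · have : f (𝒢.pt0 x) = 1 := if_neg hx
      rw [this, one_smul]
  have hk := 𝒢.my_key E D hleib g ε f
  rw [hst] at hk
  have hfs : f (𝒢.pt0 (𝒢.src g)) = 0 := if_pos rfl
  by_cases hgt : 𝒢.tgt g = 𝒢.src g
  · have h0 : ε (𝒢.pt0 (𝒢.tgt g)) = 0 := by rw [hgt]; exact hε
    rw [h0, hk, hfs, h0]
    simp
  · have hft : f (𝒢.pt0 (𝒢.tgt g)) = 1 := if_neg hgt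
    rw [hk, hfs, hft]
    simp

/-- The section of `E` supported at `s(g)` with value `e` there. -/
noncomputable def my_sec (E : M → Type) [∀ x, AddCommGroup (E x)] [∀ x, Module ℝ (E x)]
    (g : G) (e : E (𝒢.src g)) : 𝒢.ECochain E 0 :=
  fun z => if h : z.1.1 = 𝒢.src g then fcst E h.symm e else 0

theorem my_sec_src (E : M → Type) [∀ x, AddCommGroup (E x)] [∀ x, Module ℝ (E x)]
    (g : G) (e : E (𝒢.src g)) : 𝒢.my_sec E g e (𝒢.pt0 (𝒢.src g)) = e := by
  simp only [my_sec]
  rw [dif_pos trivial]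
  rfl

theorem my_sec_add (E : M → Type) [∀ x, AddCommGroup (E x)] [∀ x, Module ℝ (E x)]
    (g : G) (e e' : E (𝒢.src g)) :
    𝒢.my_sec E g (e + e') = 𝒢.my_sec E g e + 𝒢.my_sec E g e' := by
  funext z
  simp only [my_sec, Pi.add_apply]
  split
  · rw [my_fcst_add]
  · rw [add_zero]

theorem my_sec_smul (E : M → Type) [∀ x, AddCommGroup (E x)] [∀ x, Module ℝ (E x)]
    (g : G) (r : ℝ) (e : E (𝒢.src g)) :
    𝒢.my_sec E g (r • e) = r • 𝒢.my_sec E g e := by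
  funext z
  simp only [my_sec, Pi.smul_apply]
  split
  · rw [my_fcst_smul]
  · rw [smul_zero]

theorem quasiAction_of_operator_wellDefined
    (E : M → Type) [∀ x, AddCommGroup (E x)] [∀ x, Module ℝ (E x)]
    (D : ∀ p, 𝒢.ECochain E p → 𝒢.ECochain E (p+1))
    (hlin : ∀ p, IsLinearMap ℝ (D p))
    (hleib : 𝒢.IsLeibnizOp E D) :
    (∀ (g : G) (ε ε' : 𝒢.ECochain E 0),
        ε (𝒢.pt0 (𝒢.src g)) = ε' (𝒢.pt0 (𝒢.src g)) →
        D 0 ε (𝒢.pt1 g) + ε (𝒢.pt0 (𝒢.tgt g)) = D 0 ε' (𝒢.pt1 g) + ε' (𝒢.pt0 (𝒢.tgt g))) ∧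
    (∀ g : G, ∃! Δg : E (𝒢.src g) →ₗ[ℝ] E (𝒢.tgt g),
        ∀ ε : 𝒢.ECochain E 0,
          Δg (ε (𝒢.pt0 (𝒢.src g))) = D 0 ε (𝒢.pt1 g) + ε (𝒢.pt0 (𝒢.tgt g))) := by
  have part1 : ∀ (g : G) (ε ε' : 𝒢.ECochain E 0),
      ε (𝒢.pt0 (𝒢.src g)) = ε' (𝒢.pt0 (𝒢.src g)) →
      D 0 ε (𝒢.pt1 g) + ε (𝒢.pt0 (𝒢.tgt g)) = D 0 ε' (𝒢.pt1 g) + ε' (𝒢.pt0 (𝒢.tgt g)) := by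
    intro g ε ε' hεε
    have hδ : (ε - ε') (𝒢.pt0 (𝒢.src g)) = 0 := by
      rw [Pi.sub_apply, hεε, sub_self]
    have hv := 𝒢.my_vanish E D hleib g (ε - ε') hδ
    rw [(hlin 0).map_sub, Pi.sub_apply, Pi.sub_apply] at hv
    rw [sub_add_sub_comm] at hv
    exact sub_eq_zero.mp hv
  refine ⟨part1, fun g => ?_⟩
  refine ⟨{ toFun := fun e => D 0 (𝒢.my_sec E g e) (𝒢.pt1 g) + 𝒢.my_sec E g e (𝒢.pt0 (𝒢.tgt g))
            map_add' := ?_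
            map_smul' := ?_ }, ?_, ?_⟩
  · intro e e'
    dsimp only
    rw [𝒢.my_sec_add, (hlin 0).map_add, Pi.add_apply, Pi.add_apply]
    abel
  · intro r e
    dsimp only
    rw [𝒢.my_sec_smul, (hlin 0).map_smul, Pi.smul_apply, Pi.smul_apply, RingHom.id_apply,
      smul_add]
  · intro ε
    exact part1 g (𝒢.my_sec E g (ε (𝒢.pt0 (𝒢.src g)))) ε (𝒢.my_sec_src E g _)
  · intro Δ' hΔ'
    ext e
    have h1 := hΔ' (𝒢.my_sec E g e)
    rw [𝒢.my_sec_src] at h1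
    exact h1

end SetGroupoid
end

section
/- Fix ∂ = 0 (type 0). (1) A 4-tuple (Δ^C, Δ^E, 0, Ω), with Δ^C, Δ^E unital quasi-actions of G on C and E and Ω ∈ C²(G;E→C) normalized, satisfies the structure equations (i)–(iv) of the tuple–operator correspondence if and only if Δ^C and Δ^E are representations of G on C and E and DΩ = 0, where D : C^p(G;E→C) → C^{p+1}(G;E→C) is defined by (Dω)(g_0,…,g_p) = Δ^C_{g_0}∘ω(g_1,…,g_p) + Σ_{i=1}^p (−1)^i ω(g_0,…,g_{i−1}g_i,…,g_p) + (−1)^{p+1} ω(g_0,…,g_{p−1})∘Δ^E_{g_p}. (2) If 𝒟 and 𝒟̃ are the representations up to homotopy corresponding to type-0 tuples (Δ^C, Δ^E, 0, Ω) and (Δ̃^C, Δ̃^E, 0, Ω̃), then 𝒟̃ = (1−σ̂)∘𝒟∘(1+σ̂) for some normalized σ ∈ C¹(G;E→C) if and only if Δ^C = Δ̃^C, Δ^E = Δ̃^E, and Ω̃ = Ω − Dσ for some normalized σ ∈ C¹(G;E→C). -/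
attribute [local instance] Classical.propDecidable

namespace SetGroupoid
variable {G M : Type} (𝒢 : SetGroupoid G M)
variable (E C : M → Type)
  [∀ x, AddCommGroup (E x)] [∀ x, Module ℝ (E x)]
  [∀ x, AddCommGroup (C x)] [∀ x, Module ℝ (C x)]

/-- A family of linear maps `∂ₓ : Cₓ → Eₓ`. -/
abbrev DelMap := ∀ x : M, C x →ₗ[ℝ] E x

/-- A transformation 2-cochain in concrete form: a linear map
`E_{s(g₂)} → C_{t(g₁)}` for every composable pair. -/
abbrev Omega2 := ∀ g₁ g₂ : G, 𝒢.src g₁ = 𝒢.tgt g₂ → (E (𝒢.src g₂) →ₗ[ℝ] C (𝒢.tgt g₁))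

/-- A transformation 1-cochain in concrete form: a linear map
`E_{s(g)} → C_{t(g)}` for every arrow. -/
abbrev Sigma1 := ∀ g : G, E (𝒢.src g) →ₗ[ℝ] C (𝒢.tgt g)

/-- A concrete transformation 2-cochain is normalized. -/
def IsNormalizedOmega (Ω : 𝒢.Omega2 E C) : Prop :=
  ∀ (g₁ g₂ : G) (h : 𝒢.src g₁ = 𝒢.tgt g₂),
    (𝒢.IsUnitArrow g₁ ∨ 𝒢.IsUnitArrow g₂) → Ω g₁ g₂ h = 0

/-- A concrete transformation 1-cochain is normalized. -/
def IsNormalizedSigma (σ : 𝒢.Sigma1 E C) : Prop := ∀ x : M, σ (𝒢.unit x) = 0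

/-- The degree-`p` component `C^p(G;E) ⊕ C^{p+1}(G;C)` of `C(G; E ⊕ C[1])`. -/
abbrev TwoTerm (p : ℕ) := 𝒢.ECochain E p × 𝒢.ECochain C (p+1)

/-- Reindexing of `TwoTerm` along an equality of degrees. -/
@[reducible] def recastTT {a b : ℕ} (h : a = b) (ωα : 𝒢.TwoTerm E C a) : 𝒢.TwoTerm E C b :=
  (𝒢.recastE E h ωα.1, 𝒢.recastE C (by omega : a+1 = b+1) ωα.2)

/-- The componentwise right `C(G)`-module structure on `C(G; E ⊕ C[1])`. -/
noncomputable def starTT (p q : ℕ) (ωα : 𝒢.TwoTerm E C p) (f : 𝒢.Cochain q) :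
    𝒢.TwoTerm E C (p+q) :=
  (𝒢.starE E p q ωα.1 f,
   𝒢.recastE C (by omega : (p+1)+q = (p+q)+1) (𝒢.starE C (p+1) q ωα.2 f))

/-- The operator `∂̂` induced by a family `∂ₓ : Cₓ → Eₓ`. -/
def hatDel (del : DelMap E C) (p : ℕ) (α : 𝒢.ECochain C p) : 𝒢.ECochain E p :=
  fun z => del z.1.1 (α z)

/-- The operator `σ̂ : C^q(G;E) → C^{q+1}(G;C)` induced by a transformation
1-cochain: `(σ̂η)(g₁,…,g_{q+1}) = σ_{g₁}(η(g₂,…,g_{q+1}))`. -/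
noncomputable def hatSigma (σ : 𝒢.Sigma1 E C) (p : ℕ) (ω : 𝒢.ECochain E p) :
    𝒢.ECochain C (p+1) :=
  fun z =>
    fcst C (z.2.2 (Nat.succ_pos p))
      (σ (z.1.2 ⟨0, Nat.succ_pos p⟩)
        (𝒢.extE E p ω
          (𝒢.src (z.1.2 ⟨0, Nat.succ_pos p⟩),
           fun i => z.1.2 ⟨i.1 + 1, by have := i.isLt; omega⟩)))

/-- The operator `Ω̂ : C^p(G;E) → C^{p+2}(G;C)` induced by a transformation
2-cochain: `(Ω̂η)(g₁,…,g_{p+2}) = Ω_{g₁,g₂}(η(g₃,…,g_{p+2}))`. -/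
noncomputable def hatOmega (Ω : 𝒢.Omega2 E C) (p : ℕ) (ω : 𝒢.ECochain E p) :
    𝒢.ECochain C (p+2) :=
  fun z =>
    fcst C (z.2.2 (by omega))
      (Ω (z.1.2 ⟨0, by omega⟩) (z.1.2 ⟨1, by omega⟩) (z.2.1 0 (by omega))
        (𝒢.extE E p ω
          (𝒢.src (z.1.2 ⟨1, by omega⟩),
           fun i => z.1.2 ⟨i.1 + 2, by have := i.isLt; omega⟩)))

/-- The structure equations (i)–(iv) of a 2-term representation up to homotopy,
together with unitality of the quasi-actions and normalization of `Ω`. -/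
def IsRepHtpyTuple (ΔC : 𝒢.QAct C) (ΔE : 𝒢.QAct E) (del : DelMap E C)
    (Ω : 𝒢.Omega2 E C) : Prop :=
  𝒢.IsUnitalQ C ΔC ∧ 𝒢.IsUnitalQ E ΔE ∧ 𝒢.IsNormalizedOmega E C Ω ∧
  (∀ g₁ : G, ΔE g₁ ∘ₗ del (𝒢.src g₁) = del (𝒢.tgt g₁) ∘ₗ ΔC g₁) ∧
  (∀ (g₁ g₂ : G) (h : 𝒢.src g₁ = 𝒢.tgt g₂),
    ΔC g₁ ∘ₗ lcast C h.symm ∘ₗ ΔC g₂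
      - lcast C (𝒢.tgt_mul g₁ g₂ h) ∘ₗ ΔC (𝒢.mul g₁ g₂) ∘ₗ lcast C (𝒢.src_mul g₁ g₂ h).symm
      + Ω g₁ g₂ h ∘ₗ del (𝒢.src g₂) = 0) ∧
  (∀ (g₁ g₂ : G) (h : 𝒢.src g₁ = 𝒢.tgt g₂),
    ΔE g₁ ∘ₗ lcast E h.symm ∘ₗ ΔE g₂
      - lcast E (𝒢.tgt_mul g₁ g₂ h) ∘ₗ ΔE (𝒢.mul g₁ g₂) ∘ₗ lcast E (𝒢.src_mul g₁ g₂ h).symm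
      + del (𝒢.tgt g₁) ∘ₗ Ω g₁ g₂ h = 0) ∧
  (∀ (g₁ g₂ g₃ : G) (h₁ : 𝒢.src g₁ = 𝒢.tgt g₂) (h₂ : 𝒢.src g₂ = 𝒢.tgt g₃),
    ΔC g₁ ∘ₗ lcast C h₁.symm ∘ₗ Ω g₂ g₃ h₂
      - lcast C (𝒢.tgt_mul g₁ g₂ h₁) ∘ₗ Ω (𝒢.mul g₁ g₂) g₃ ((𝒢.src_mul g₁ g₂ h₁).trans h₂)
      + Ω g₁ (𝒢.mul g₂ g₃) (h₁.trans (𝒢.tgt_mul g₂ g₃ h₂).symm)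
          ∘ₗ lcast E (𝒢.src_mul g₂ g₃ h₂).symm
      - Ω g₁ g₂ h₁ ∘ₗ lcast E h₂.symm ∘ₗ ΔE g₃ = 0)

/-- The level `-1` part of the operator `𝒟 = D^E + D^C + ∂̂ + Ω̂` associated to a
4-tuple: it sends `Γ(C) = C^0(G;C)` (total degree `-1`) to total degree `0`. -/
noncomputable def tupleOpNeg (ΔC : 𝒢.QAct C) (del : DelMap E C)
    (α : 𝒢.ECochain C 0) : 𝒢.TwoTerm E C 0 :=
  (𝒢.hatDel E C del 0 α, -(𝒢.simpD C ΔC 0 α))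

/-- The non-negative-degree part of the operator `𝒟 = D^E + D^C + ∂̂ + Ω̂`
associated to a 4-tuple (`D^C` is minus the simplicial operator of `Δ^C`). -/
noncomputable def tupleOpPos (ΔC : 𝒢.QAct C) (ΔE : 𝒢.QAct E) (del : DelMap E C)
    (Ω : 𝒢.Omega2 E C) (p : ℕ) (ωα : 𝒢.TwoTerm E C p) : 𝒢.TwoTerm E C (p+1) :=
  (𝒢.simpD E ΔE p ωα.1 + 𝒢.hatDel E C del (p+1) ωα.2,
   -(𝒢.simpD C ΔC (p+1) ωα.2) + 𝒢.hatOmega E C Ω p ωα.1)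

/-- Normalization of an element of `C(G; E ⊕ C[1])`. -/
def IsNormalizedTT (p : ℕ) (ωα : 𝒢.TwoTerm E C p) : Prop :=
  𝒢.IsNormalizedE E p ωα.1 ∧ 𝒢.IsNormalizedE C (p+1) ωα.2

/-- A representation up to homotopy of `G` on `E ⊕ C[1]`: a degree-1 ℝ-linear
operator on `C(G; E ⊕ C[1])` (given by its level `-1` component `Dneg` on
`C^0(G;C)` and its components `Dpos p` on `C^p(G;E) ⊕ C^{p+1}(G;C)`), satisfying
the Leibniz rule, preserving normalized cochains, and squaring to zero. -/
noncomputable def IsRUTHPair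
    (Dneg : 𝒢.ECochain C 0 → 𝒢.TwoTerm E C 0)
    (Dpos : ∀ p, 𝒢.TwoTerm E C p → 𝒢.TwoTerm E C (p+1)) : Prop :=
  IsLinearMap ℝ Dneg ∧ (∀ p, IsLinearMap ℝ (Dpos p)) ∧
  -- Leibniz rule on the level `-1` component, `f` of degree 0:
  (∀ (f : 𝒢.Cochain 0) (α : 𝒢.ECochain C 0),
    Dneg (𝒢.starE C 0 0 α f) =
      𝒢.starTT E C 0 0 (Dneg α) f +
        (-1 : ℝ) • (((0 : 𝒢.ECochain E 0), 𝒢.starE C 0 1 α (𝒢.delta 0 f)) : 𝒢.TwoTerm E C 0)) ∧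
  -- Leibniz rule on the level `-1` component, `f` of positive degree:
  (∀ (q : ℕ) (f : 𝒢.Cochain (q+1)) (α : 𝒢.ECochain C 0),
    Dpos q ((0 : 𝒢.ECochain E q),
        𝒢.recastE C (by omega : 0+(q+1) = q+1) (𝒢.starE C 0 (q+1) α f)) =
      𝒢.recastTT E C (by omega : 0+(q+1) = q+1) (𝒢.starTT E C 0 (q+1) (Dneg α) f) +
        (-1 : ℝ) • (((0 : 𝒢.ECochain E (q+1)),
          𝒢.recastE C (by omega : 0+(q+2) = q+2) (𝒢.starE C 0 (q+2) α (𝒢.delta (q+1) f))) :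
            𝒢.TwoTerm E C (q+1))) ∧
  -- Leibniz rule in non-negative degrees:
  (∀ (p q : ℕ) (ωα : 𝒢.TwoTerm E C p) (f : 𝒢.Cochain q),
    Dpos (p+q) (𝒢.starTT E C p q ωα f) =
      𝒢.recastTT E C (by omega : (p+1)+q = (p+q)+1) (𝒢.starTT E C (p+1) q (Dpos p ωα) f) +
        ((-1 : ℝ) ^ p) •
          𝒢.recastTT E C (by omega : p+(q+1) = (p+q)+1)
            (𝒢.starTT E C p (q+1) ωα (𝒢.delta q f))) ∧
  -- preservation of normalized cochains:
  (∀ α : 𝒢.ECochain C 0, 𝒢.IsNormalizedE C 0 α → 𝒢.IsNormalizedTT E C 0 (Dneg α)) ∧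
  (∀ p (ωα : 𝒢.TwoTerm E C p), 𝒢.IsNormalizedTT E C p ωα →
    𝒢.IsNormalizedTT E C (p+1) (Dpos p ωα)) ∧
  -- 𝒟 ∘ 𝒟 = 0:
  (∀ α : 𝒢.ECochain C 0, Dpos 0 (Dneg α) = 0) ∧
  (∀ p (ωα : 𝒢.TwoTerm E C p), Dpos (p+1) (Dpos p ωα) = 0)

end SetGroupoid
namespace SetGroupoid
variable {G M : Type} (𝒢 : SetGroupoid G M)
variable (E C : M → Type)
  [∀ x, AddCommGroup (E x)] [∀ x, Module ℝ (E x)]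
  [∀ x, AddCommGroup (C x)] [∀ x, Module ℝ (C x)]

/-- A gauge transformation of `C(G; E ⊕ C[1])`: a degree-preserving right
`C(G)`-module automorphism (given by its level `-1` component `Tneg` on
`C^0(G;C)` and components `Tpos p` on `C^p(G;E) ⊕ C^{p+1}(G;C)`), preserving
normalized cochains and satisfying `μ ∘ T = μ`. -/
noncomputable def IsGaugePair
    (Tneg : 𝒢.ECochain C 0 → 𝒢.ECochain C 0)
    (Tpos : ∀ p, 𝒢.TwoTerm E C p → 𝒢.TwoTerm E C p) : Prop :=
  IsLinearMap ℝ Tneg ∧ (∀ p, IsLinearMap ℝ (Tpos p)) ∧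
  Function.Bijective Tneg ∧ (∀ p, Function.Bijective (Tpos p)) ∧
  -- module-morphism property, level `-1`, `f` of degree 0:
  (∀ (f : 𝒢.Cochain 0) (α : 𝒢.ECochain C 0),
    Tneg (𝒢.starE C 0 0 α f) = 𝒢.starE C 0 0 (Tneg α) f) ∧
  -- module-morphism property, level `-1`, `f` of positive degree:
  (∀ (q : ℕ) (f : 𝒢.Cochain (q+1)) (α : 𝒢.ECochain C 0),
    Tpos q ((0 : 𝒢.ECochain E q),
        𝒢.recastE C (by omega : 0+(q+1) = q+1) (𝒢.starE C 0 (q+1) α f)) =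
      ((0 : 𝒢.ECochain E q),
        𝒢.recastE C (by omega : 0+(q+1) = q+1) (𝒢.starE C 0 (q+1) (Tneg α) f))) ∧
  -- module-morphism property in non-negative degrees:
  (∀ (p q : ℕ) (ωα : 𝒢.TwoTerm E C p) (f : 𝒢.Cochain q),
    Tpos (p+q) (𝒢.starTT E C p q ωα f) = 𝒢.starTT E C p q (Tpos p ωα) f) ∧
  -- preservation of normalized cochains:
  (∀ α : 𝒢.ECochain C 0, 𝒢.IsNormalizedE C 0 α → 𝒢.IsNormalizedE C 0 (Tneg α)) ∧
  (∀ p (ωα : 𝒢.TwoTerm E C p), 𝒢.IsNormalizedTT E C p ωα →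
    𝒢.IsNormalizedTT E C p (Tpos p ωα)) ∧
  -- `μ ∘ T = μ`:
  (∀ α : 𝒢.ECochain C 0, Tneg α = α) ∧
  (∀ ωα : 𝒢.TwoTerm E C 0, (Tpos 0 ωα).1 = ωα.1)

/-- The operator `1 + σ̂` on `C(G; E ⊕ C[1])` (its level `-1` component is the
identity). -/
noncomputable def onePlusSigma (σ : 𝒢.Sigma1 E C) (p : ℕ) (ωα : 𝒢.TwoTerm E C p) :
    𝒢.TwoTerm E C p :=
  (ωα.1, ωα.2 + 𝒢.hatSigma E C σ p ωα.1)

/-- The operator `1 - σ̂` on `C(G; E ⊕ C[1])` (its level `-1` component is the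
identity). -/
noncomputable def oneMinusSigma (σ : 𝒢.Sigma1 E C) (p : ℕ) (ωα : 𝒢.TwoTerm E C p) :
    𝒢.TwoTerm E C p :=
  (ωα.1, ωα.2 - 𝒢.hatSigma E C σ p ωα.1)

end SetGroupoid
namespace SetGroupoid
variable {G M : Type} (𝒢 : SetGroupoid G M)
variable (E C : M → Type)
  [∀ x, AddCommGroup (E x)] [∀ x, Module ℝ (E x)]
  [∀ x, AddCommGroup (C x)] [∀ x, Module ℝ (C x)]

/-- The differential `D : C¹(G;E→C) → C²(G;E→C)` associated to quasi-actions
`Δ^C`, `Δ^E`: `(Dσ)(g₀,g₁) = Δ^C_{g₀}∘σ(g₁) - σ(g₀g₁) + σ(g₀)∘Δ^E_{g₁}`. -/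
def transD1 (ΔC : 𝒢.QAct C) (ΔE : 𝒢.QAct E) (σ : 𝒢.Sigma1 E C) :
    ∀ (g₀ g₁ : G), 𝒢.src g₀ = 𝒢.tgt g₁ → (E (𝒢.src g₁) →ₗ[ℝ] C (𝒢.tgt g₀)) :=
  fun g₀ g₁ h =>
    ΔC g₀ ∘ₗ lcast C h.symm ∘ₗ σ g₁
    - lcast C (𝒢.tgt_mul g₀ g₁ h) ∘ₗ σ (𝒢.mul g₀ g₁) ∘ₗ lcast E (𝒢.src_mul g₀ g₁ h).symm
    + σ g₀ ∘ₗ lcast E h.symm ∘ₗ ΔE g₁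

/-- The differential `D : C²(G;E→C) → C³(G;E→C)` associated to quasi-actions
`Δ^C`, `Δ^E`: `(DΩ)(g₀,g₁,g₂) = Δ^C_{g₀}∘Ω(g₁,g₂) - Ω(g₀g₁,g₂) + Ω(g₀,g₁g₂)
 - Ω(g₀,g₁)∘Δ^E_{g₂}`. -/
def transD2 (ΔC : 𝒢.QAct C) (ΔE : 𝒢.QAct E) (Ω : 𝒢.Omega2 E C) :
    ∀ (g₀ g₁ g₂ : G), 𝒢.src g₀ = 𝒢.tgt g₁ → 𝒢.src g₁ = 𝒢.tgt g₂ →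
      (E (𝒢.src g₂) →ₗ[ℝ] C (𝒢.tgt g₀)) :=
  fun g₀ g₁ g₂ h₀ h₁ =>
    ΔC g₀ ∘ₗ lcast C h₀.symm ∘ₗ Ω g₁ g₂ h₁
    - lcast C (𝒢.tgt_mul g₀ g₁ h₀) ∘ₗ Ω (𝒢.mul g₀ g₁) g₂ ((𝒢.src_mul g₀ g₁ h₀).trans h₁)
    + Ω g₀ (𝒢.mul g₁ g₂) (h₀.trans (𝒢.tgt_mul g₁ g₂ h₁).symm)
        ∘ₗ lcast E (𝒢.src_mul g₁ g₂ h₁).symm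
    - Ω g₀ g₁ h₀ ∘ₗ lcast E h₁.symm ∘ₗ ΔE g₂

end SetGroupoid
namespace SetGroupoid
variable {G M : Type} (𝒢 : SetGroupoid G M)

/-!
With `∂ = 0` the structure equations (ii) and (iii) say precisely that `Δ^C` and `Δ^E` are flat,
and (iv) is `DΩ = 0`. For (2), conjugating a type-0 operator by `1 + σ̂` leaves `D^E` and `D^C`
unchanged and replaces `Ω̂` by `Ω̂ - (δ_C σ̂ + σ̂ δ_E)`, where `δ` are the simplicial operators;
in `δ_C σ̂ + σ̂ δ_E` only the terms involving the first two arrows survive, and they form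
`(Dσ)^`. Conversely a type-0 operator determines its tuple: testing it in degree 0 against
sections concentrated at a single point recovers `Δ^C`, `Δ^E` and `Ω`.
-/

section Transport
variable {α : Type} (F : α → Type)

theorem fcst_trans {a b c : α} (h₁ : a = b) (h₂ : b = c) (v : F a) :
    fcst F h₂ (fcst F h₁ v) = fcst F (h₁.trans h₂) v := by
  cases h₁; cases h₂; rfl

theorem fcst_injective {a b : α} (h : a = b) : Function.Injective (fcst F h) := by
  cases h; exact Function.injective_id

variable [∀ a, AddCommGroup (F a)] [∀ a, Module ℝ (F a)]

theorem lcast_apply {a b : α} (h : a = b) (v : F a) : lcast F h v = fcst F h v := rfl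

theorem fcst_add {a b : α} (h : a = b) (u v : F a) :
    fcst F h (u + v) = fcst F h u + fcst F h v := (lcast F h).map_add u v

theorem fcst_sub {a b : α} (h : a = b) (u v : F a) :
    fcst F h (u - v) = fcst F h u - fcst F h v := (lcast F h).map_sub u v

theorem fcst_zero {a b : α} (h : a = b) : fcst F h (0 : F a) = 0 := (lcast F h).map_zero

theorem fcst_smul {a b : α} (h : a = b) (r : ℝ) (u : F a) :
    fcst F h (r • u) = r • fcst F h u := (lcast F h).map_smul r u

theorem fcst_sum {ι : Type} (s : Finset ι) {a b : α} (h : a = b) (f : ι → F a) :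
    fcst F h (∑ i ∈ s, f i) = ∑ i ∈ s, fcst F h (f i) := map_sum (lcast F h) f s

end Transport

section Strings

-- Reducible, so that `(tailPt z).1.1` and `src (headArrow z)` are identified by `rw` and `simp`.
abbrev headArrow {p : ℕ} (z : 𝒢.APt (p+1)) : G := z.1.2 ⟨0, Nat.succ_pos p⟩

abbrev tailPt {p : ℕ} (z : 𝒢.APt (p+1)) : 𝒢.APt p :=
  ⟨(𝒢.src (𝒢.headArrow z), fun i => z.1.2 ⟨i.1 + 1, Nat.succ_lt_succ i.isLt⟩),
    fun i h => z.2.1 (i+1) (by omega), fun _ => (z.2.1 0 (by omega)).symm⟩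

theorem tgt_headArrow {p : ℕ} (z : 𝒢.APt (p+1)) : 𝒢.tgt (𝒢.headArrow z) = z.1.1 :=
  z.2.2 (Nat.succ_pos p)

theorem src_headArrow {p : ℕ} (z : 𝒢.APt (p+2)) :
    𝒢.src (𝒢.headArrow z) = 𝒢.tgt (𝒢.headArrow (𝒢.tailPt z)) :=
  z.2.1 0 (by omega)

theorem isComposable_faceTuple {p : ℕ} {v : Fin (p+1) → G} (hv : 𝒢.IsComposable (p+1) v)
    (j : Fin (p+2)) : 𝒢.IsComposable p (𝒢.faceTuple p v j) := by
  intro i h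
  unfold faceTuple
  dsimp only
  split_ifs <;>
    first
      | exact hv i (by omega)
      | exact hv (i+1) (by omega)
      | exact (hv i (by omega)).trans (𝒢.tgt_mul _ _ (hv (i+1) (by omega))).symm
      | exact (𝒢.src_mul _ _ (hv i (by omega))).trans (hv (i+1) (by omega))
      | (exfalso; omega)

theorem isAnchored_faceTuple {p : ℕ} (z : 𝒢.APt (p+1)) (j : Fin (p+1)) :
    𝒢.IsAnchored p (z.1.1, 𝒢.faceTuple p z.1.2 j.succ) := by
  refine ⟨𝒢.isComposable_faceTuple z.2.1 j.succ, fun h => ?_⟩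
  change 𝒢.tgt (𝒢.faceTuple p z.1.2 j.succ ⟨0, h⟩) = z.1.1
  unfold faceTuple
  simp only [Fin.val_succ]
  split_ifs
  · exact z.2.2 (Nat.succ_pos p)
  · exact (𝒢.tgt_mul _ _ (z.2.1 0 (by omega))).trans (z.2.2 (Nat.succ_pos p))
  · omega

variable {p : ℕ} (v : Fin (p+2) → G)

theorem faceTuple_one_zero :
    𝒢.faceTuple (p+1) v (0 : Fin (p+2)).succ ⟨0, Nat.succ_pos p⟩
      = 𝒢.mul (v ⟨0, by omega⟩) (v ⟨1, by omega⟩) := by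
  unfold faceTuple
  simp only [Fin.val_succ, Fin.val_zero]
  split_ifs <;> first | rfl | omega

theorem faceTuple_one_succ (i : Fin p) :
    𝒢.faceTuple (p+1) v (0 : Fin (p+2)).succ ⟨i.1 + 1, Nat.succ_lt_succ i.isLt⟩
      = v ⟨i.1 + 2, by omega⟩ := by
  unfold faceTuple
  simp only [Fin.val_succ, Fin.val_zero]
  split_ifs <;> rfl

theorem faceTuple_succ_succ_zero (k : Fin (p+1)) :
    𝒢.faceTuple (p+1) v k.succ.succ ⟨0, Nat.succ_pos p⟩ = v ⟨0, by omega⟩ := by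
  unfold faceTuple
  simp only [Fin.val_succ]
  split_ifs <;> first | rfl | omega

theorem faceTuple_succ_succ_succ (k : Fin (p+1)) (i : Fin p) :
    𝒢.faceTuple (p+1) v k.succ.succ ⟨i.1 + 1, Nat.succ_lt_succ i.isLt⟩
      = 𝒢.faceTuple p (fun i => v ⟨i.1 + 1, Nat.succ_lt_succ i.isLt⟩) k.succ i := by
  unfold faceTuple
  simp only [Fin.val_succ]
  split_ifs <;> first | rfl | omega

end Strings

section Cochains
variable (F : M → Type) [∀ x, AddCommGroup (F x)] [∀ x, Module ℝ (F x)]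

theorem extE_val {p : ℕ} (ω : 𝒢.ECochain F p) (z : 𝒢.APt p) : 𝒢.extE F p ω z.1 = ω z :=
  dif_pos z.2

theorem extE_tailPt {p : ℕ} (ω : 𝒢.ECochain F p) (z : 𝒢.APt (p+1)) :
    𝒢.extE F p ω (𝒢.src (𝒢.headArrow z), (𝒢.tailPt z).1.2) = ω (𝒢.tailPt z) :=
  𝒢.extE_val F ω (𝒢.tailPt z)

theorem extE_anchor_eq {p : ℕ} (ω : 𝒢.ECochain F p) {x y : M} (h : x = y) (t : Fin p → G) :
    𝒢.extE F p ω (y, t) = fcst F h (𝒢.extE F p ω (x, t)) := by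
  subst h; rfl

theorem extE_add {p : ℕ} (ω η : 𝒢.ECochain F p) (w : M × (Fin p → G)) :
    𝒢.extE F p (ω + η) w = 𝒢.extE F p ω w + 𝒢.extE F p η w := by
  unfold extE; split_ifs <;> simp

theorem extE_zero {p : ℕ} (w : M × (Fin p → G)) : 𝒢.extE F p 0 w = 0 := by
  unfold extE; split_ifs <;> rfl

theorem simpD_apply (Δ : 𝒢.QAct F) {p : ℕ} (ω : 𝒢.ECochain F p) (z : 𝒢.APt (p+1)) :
    𝒢.simpD F Δ p ω z
      = fcst F (𝒢.tgt_headArrow z) (Δ (𝒢.headArrow z) (ω (𝒢.tailPt z)))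
        + ∑ j : Fin (p+1), (-1 : ℝ) ^ (j.1 + 1) •
            𝒢.extE F p ω (z.1.1, 𝒢.faceTuple p z.1.2 j.succ) := by
  rw [simpD, ← 𝒢.extE_val F ω (𝒢.tailPt z)]

theorem simpD_add (Δ : 𝒢.QAct F) {p : ℕ} (ω η : 𝒢.ECochain F p) :
    𝒢.simpD F Δ p (ω + η) = 𝒢.simpD F Δ p ω + 𝒢.simpD F Δ p η := by
  funext z
  simp only [simpD, Pi.add_apply, extE_add, map_add, fcst_add, smul_add,
    Finset.sum_add_distrib]
  abel

theorem simpD_zero (Δ : 𝒢.QAct F) {p : ℕ} : 𝒢.simpD F Δ p 0 = 0 := by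
  funext z
  simp only [simpD, extE_zero, map_zero, fcst_zero, smul_zero, Finset.sum_const_zero,
    add_zero, Pi.zero_apply]

end Cochains

section Hats
variable (E C : M → Type)
  [∀ x, AddCommGroup (E x)] [∀ x, Module ℝ (E x)]
  [∀ x, AddCommGroup (C x)] [∀ x, Module ℝ (C x)]

theorem hatSigma_apply (σ : 𝒢.Sigma1 E C) {p : ℕ} (ω : 𝒢.ECochain E p) (z : 𝒢.APt (p+1)) :
    𝒢.hatSigma E C σ p ω z
      = fcst C (𝒢.tgt_headArrow z) (σ (𝒢.headArrow z) (ω (𝒢.tailPt z))) := by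
  rw [hatSigma, ← 𝒢.extE_val E ω (𝒢.tailPt z)]

theorem hatSigma_apply_of_eq (σ : 𝒢.Sigma1 E C) {p : ℕ} (ω : 𝒢.ECochain E p)
    (z : 𝒢.APt (p+1)) {g : G} (hg : z.1.2 ⟨0, Nat.succ_pos p⟩ = g) {t : Fin p → G}
    (ht : ∀ i : Fin p, z.1.2 ⟨i.1 + 1, Nat.succ_lt_succ i.isLt⟩ = t i)
    (hy : 𝒢.tgt g = z.1.1) :
    𝒢.hatSigma E C σ p ω z = fcst C hy (σ g (𝒢.extE E p ω (𝒢.src g, t))) := by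
  obtain ⟨⟨x, v⟩, hz⟩ := z
  subst hg
  obtain rfl : (fun i : Fin p => v ⟨i.1 + 1, Nat.succ_lt_succ i.isLt⟩) = t := funext ht
  rfl

theorem hatSigma_zero (σ : 𝒢.Sigma1 E C) {p : ℕ} : 𝒢.hatSigma E C σ p 0 = 0 := by
  funext z
  simp only [hatSigma, extE_zero, map_zero, fcst_zero, Pi.zero_apply]

theorem hatOmega_apply (Ω : 𝒢.Omega2 E C) {p : ℕ} (ω : 𝒢.ECochain E p) (z : 𝒢.APt (p+2)) :
    𝒢.hatOmega E C Ω p ω z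
      = fcst C (𝒢.tgt_headArrow z)
          (Ω (𝒢.headArrow z) (𝒢.headArrow (𝒢.tailPt z)) (𝒢.src_headArrow z)
            (ω (𝒢.tailPt (𝒢.tailPt z)))) := by
  rw [hatOmega, ← 𝒢.extE_val E ω (𝒢.tailPt (𝒢.tailPt z))]

theorem hatOmega_sub (Ω Ω' : 𝒢.Omega2 E C) {p : ℕ} (ω : 𝒢.ECochain E p) :
    𝒢.hatOmega E C (fun g₁ g₂ h => Ω g₁ g₂ h - Ω' g₁ g₂ h) p ω
      = 𝒢.hatOmega E C Ω p ω - 𝒢.hatOmega E C Ω' p ω := by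
  funext z
  simp only [hatOmega, Pi.sub_apply, LinearMap.sub_apply, fcst_sub]

theorem hatDel_zero {p : ℕ} (α : 𝒢.ECochain C p) :
    𝒢.hatDel E C (fun x => (0 : C x →ₗ[ℝ] E x)) p α = 0 := by
  funext z
  simp only [hatDel, LinearMap.zero_apply, Pi.zero_apply]

variable (σ : 𝒢.Sigma1 E C) {p : ℕ} (ω : 𝒢.ECochain E p) (z : 𝒢.APt (p+2))

theorem extE_hatSigma_faceTuple_one :
    𝒢.extE C (p+1) (𝒢.hatSigma E C σ p ω) (z.1.1, 𝒢.faceTuple (p+1) z.1.2 (0 : Fin (p+2)).succ)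
      = fcst C (𝒢.tgt_headArrow z)
          (fcst C (𝒢.tgt_mul _ _ (𝒢.src_headArrow z))
            (σ (𝒢.mul (𝒢.headArrow z) (𝒢.headArrow (𝒢.tailPt z)))
              (fcst E (𝒢.src_mul _ _ (𝒢.src_headArrow z)).symm
                (ω (𝒢.tailPt (𝒢.tailPt z)))))) := by
  rw [𝒢.extE_val C _ ⟨_, 𝒢.isAnchored_faceTuple z 0⟩,
    𝒢.hatSigma_apply_of_eq E C σ ω _ (𝒢.faceTuple_one_zero z.1.2)
      (t := (𝒢.tailPt (𝒢.tailPt z)).1.2) (𝒢.faceTuple_one_succ z.1.2)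
      ((𝒢.tgt_mul _ _ (𝒢.src_headArrow z)).trans (𝒢.tgt_headArrow z)),
    𝒢.extE_anchor_eq E ω (𝒢.src_mul _ _ (𝒢.src_headArrow z)).symm, 𝒢.extE_tailPt E ω,
    fcst_trans]

theorem extE_hatSigma_faceTuple_succ_succ (k : Fin (p+1)) :
    𝒢.extE C (p+1) (𝒢.hatSigma E C σ p ω) (z.1.1, 𝒢.faceTuple (p+1) z.1.2 k.succ.succ)
      = fcst C (𝒢.tgt_headArrow z) (σ (𝒢.headArrow z)
          (𝒢.extE E p ω ((𝒢.tailPt z).1.1, 𝒢.faceTuple p (𝒢.tailPt z).1.2 k.succ))) := by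
  rw [𝒢.extE_val C _ ⟨_, 𝒢.isAnchored_faceTuple z k.succ⟩]
  exact 𝒢.hatSigma_apply_of_eq E C σ ω _ (𝒢.faceTuple_succ_succ_zero z.1.2 k)
    (𝒢.faceTuple_succ_succ_succ z.1.2 k) _

theorem simpD_hatSigma_add_hatSigma_simpD (ΔC : 𝒢.QAct C) (ΔE : 𝒢.QAct E) :
    𝒢.simpD C ΔC (p+1) (𝒢.hatSigma E C σ p ω) + 𝒢.hatSigma E C σ (p+1) (𝒢.simpD E ΔE p ω)
      = 𝒢.hatOmega E C (𝒢.transD1 E C ΔC ΔE σ) p ω := by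
  funext z
  -- Apart from the face merging the first two arrows, the faces of `σ̂ω` are `σ̂` of the faces
  -- of `ω`, with the opposite sign.
  have hfaces : ∑ j : Fin (p+2), (-1 : ℝ) ^ (j.1 + 1) •
        𝒢.extE C (p+1) (𝒢.hatSigma E C σ p ω) (z.1.1, 𝒢.faceTuple (p+1) z.1.2 j.succ)
      = -fcst C (𝒢.tgt_headArrow z)
          (fcst C (𝒢.tgt_mul _ _ (𝒢.src_headArrow z))
            (σ (𝒢.mul (𝒢.headArrow z) (𝒢.headArrow (𝒢.tailPt z)))
              (fcst E (𝒢.src_mul _ _ (𝒢.src_headArrow z)).symm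
                (ω (𝒢.tailPt (𝒢.tailPt z))))))
        - fcst C (𝒢.tgt_headArrow z) (σ (𝒢.headArrow z)
            (∑ k : Fin (p+1), (-1 : ℝ) ^ (k.1 + 1) •
              𝒢.extE E p ω ((𝒢.tailPt z).1.1, 𝒢.faceTuple p (𝒢.tailPt z).1.2 k.succ))) := by
    rw [Fin.sum_univ_succ, 𝒢.extE_hatSigma_faceTuple_one, map_sum, fcst_sum, sub_eq_add_neg,
      ← Finset.sum_neg_distrib]
    congr 1
    · simp
    · refine Finset.sum_congr rfl fun k _ => ?_
      rw [𝒢.extE_hatSigma_faceTuple_succ_succ, map_smul, fcst_smul, Fin.val_succ, pow_succ,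
        mul_neg_one, neg_smul]
  rw [Pi.add_apply, 𝒢.simpD_apply, hfaces, 𝒢.hatSigma_apply, 𝒢.hatSigma_apply, 𝒢.simpD_apply,
    𝒢.hatOmega_apply]
  simp only [transD1, LinearMap.add_apply, LinearMap.sub_apply, LinearMap.comp_apply, lcast_apply,
    map_add, fcst_add, fcst_sub, fcst_trans]
  abel

end Hats

section TypeZero
variable (E C : M → Type)
  [∀ x, AddCommGroup (E x)] [∀ x, Module ℝ (E x)]
  [∀ x, AddCommGroup (C x)] [∀ x, Module ℝ (C x)]

theorem isRepHtpyTuple_zero_iff {ΔC : 𝒢.QAct C} {ΔE : 𝒢.QAct E} {Ω : 𝒢.Omega2 E C}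
    (huC : 𝒢.IsUnitalQ C ΔC) (huE : 𝒢.IsUnitalQ E ΔE) (hΩ : 𝒢.IsNormalizedOmega E C Ω) :
    𝒢.IsRepHtpyTuple E C ΔC ΔE (fun x => (0 : C x →ₗ[ℝ] E x)) Ω ↔
      ((𝒢.IsUnitalQ C ΔC ∧ 𝒢.IsFlatQ C ΔC) ∧ (𝒢.IsUnitalQ E ΔE ∧ 𝒢.IsFlatQ E ΔE) ∧
        ∀ (g₀ g₁ g₂ : G) (h₀ : 𝒢.src g₀ = 𝒢.tgt g₁) (h₁ : 𝒢.src g₁ = 𝒢.tgt g₂),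
          𝒢.transD2 E C ΔC ΔE Ω g₀ g₁ g₂ h₀ h₁ = 0) := by
  simp only [IsRepHtpyTuple, IsFlatQ, transD2, LinearMap.comp_zero, LinearMap.zero_comp,
    add_zero, sub_eq_zero, huC, huE, hΩ, true_and, implies_true]

theorem tupleOpNeg_conj (ΔC : 𝒢.QAct C) (σ : 𝒢.Sigma1 E C) (α : 𝒢.ECochain C 0) :
    𝒢.oneMinusSigma E C σ 0 (𝒢.tupleOpNeg E C ΔC (fun x => (0 : C x →ₗ[ℝ] E x)) α)
      = 𝒢.tupleOpNeg E C ΔC (fun x => (0 : C x →ₗ[ℝ] E x)) α := by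
  simp only [oneMinusSigma, tupleOpNeg, hatDel_zero, hatSigma_zero, sub_zero]

theorem tupleOpPos_conj (ΔC : 𝒢.QAct C) (ΔE : 𝒢.QAct E) (Ω : 𝒢.Omega2 E C)
    (σ : 𝒢.Sigma1 E C) (p : ℕ) (ωα : 𝒢.TwoTerm E C p) :
    𝒢.oneMinusSigma E C σ (p+1)
        (𝒢.tupleOpPos E C ΔC ΔE (fun x => (0 : C x →ₗ[ℝ] E x)) Ω p (𝒢.onePlusSigma E C σ p ωα))
      = 𝒢.tupleOpPos E C ΔC ΔE (fun x => (0 : C x →ₗ[ℝ] E x))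
          (fun g₁ g₂ h => Ω g₁ g₂ h - 𝒢.transD1 E C ΔC ΔE σ g₁ g₂ h) p ωα := by
  obtain ⟨ω, α⟩ := ωα
  simp only [oneMinusSigma, onePlusSigma, tupleOpPos, hatDel_zero, add_zero, Prod.mk.injEq,
    true_and]
  rw [simpD_add, hatOmega_sub, ← 𝒢.simpD_hatSigma_add_hatSigma_simpD E C σ ω ΔC ΔE]
  abel

end TypeZero

section Recovery
variable (F : M → Type) [∀ x, AddCommGroup (F x)]

noncomputable def pointCochain (x : M) (e : F x) : 𝒢.ECochain F 0 :=
  fun w => if h : x = w.1.1 then fcst F h e else 0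

theorem pointCochain_apply_of_eq {x : M} (e : F x) (w : 𝒢.APt 0) (h : x = w.1.1) :
    𝒢.pointCochain F x e w = fcst F h e :=
  dif_pos h

variable [∀ x, Module ℝ (F x)]

theorem simpD_zero_injective {Δ Δ' : 𝒢.QAct F}
    (h : ∀ β : 𝒢.ECochain F 0, 𝒢.simpD F Δ 0 β = 𝒢.simpD F Δ' 0 β) : Δ = Δ' := by
  funext g
  ext e
  have hg := congrFun (h (𝒢.pointCochain F (𝒢.src g) e)) (𝒢.pt1 g)
  rw [simpD_apply, simpD_apply, add_left_inj,
    𝒢.pointCochain_apply_of_eq F e (𝒢.tailPt (𝒢.pt1 g)) rfl] at hg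
  exact fcst_injective F _ hg

variable (E C : M → Type)
  [∀ x, AddCommGroup (E x)] [∀ x, Module ℝ (E x)]
  [∀ x, AddCommGroup (C x)] [∀ x, Module ℝ (C x)]

theorem hatOmega_zero_injective {Ω Ω' : 𝒢.Omega2 E C}
    (h : ∀ ω : 𝒢.ECochain E 0, 𝒢.hatOmega E C Ω 0 ω = 𝒢.hatOmega E C Ω' 0 ω) : Ω = Ω' := by
  funext g₀ g₁ hc
  ext e
  have hg := congrFun (h (𝒢.pointCochain E (𝒢.src g₁) e)) (𝒢.pt2 g₀ g₁ hc)
  rw [hatOmega_apply, hatOmega_apply,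
    𝒢.pointCochain_apply_of_eq E e (𝒢.tailPt (𝒢.tailPt (𝒢.pt2 g₀ g₁ hc))) rfl] at hg
  exact fcst_injective C _ hg

theorem tupleOp_injective (del : DelMap E C) {ΔC Δ'C : 𝒢.QAct C} {ΔE Δ'E : 𝒢.QAct E}
    {Ω Ω' : 𝒢.Omega2 E C}
    (hneg : ∀ α, 𝒢.tupleOpNeg E C Δ'C del α = 𝒢.tupleOpNeg E C ΔC del α)
    (hpos : ∀ ωα, 𝒢.tupleOpPos E C Δ'C Δ'E del Ω' 0 ωα = 𝒢.tupleOpPos E C ΔC ΔE del Ω 0 ωα) :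
    Δ'C = ΔC ∧ Δ'E = ΔE ∧ Ω' = Ω := by
  refine ⟨𝒢.simpD_zero_injective C fun α => neg_injective (congrArg Prod.snd (hneg α)),
    𝒢.simpD_zero_injective E fun β => add_right_cancel (congrArg Prod.fst (hpos (β, 0))),
    𝒢.hatOmega_zero_injective E C fun ω => ?_⟩
  simpa only [tupleOpPos, simpD_zero, neg_zero, zero_add] using congrArg Prod.snd (hpos (ω, 0))

end Recovery

theorem type_zero_tuples_and_gauge_equivalence
    (E C : M → Type)
    [∀ x, AddCommGroup (E x)] [∀ x, Module ℝ (E x)]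
    [∀ x, AddCommGroup (C x)] [∀ x, Module ℝ (C x)] :
    -- (1) with ∂ = 0, the structure equations hold iff Δ^C and Δ^E are
    -- representations and DΩ = 0:
    (∀ (ΔC : 𝒢.QAct C) (ΔE : 𝒢.QAct E) (Ω : 𝒢.Omega2 E C),
      𝒢.IsUnitalQ C ΔC → 𝒢.IsUnitalQ E ΔE → 𝒢.IsNormalizedOmega E C Ω →
      (𝒢.IsRepHtpyTuple E C ΔC ΔE (fun x => (0 : C x →ₗ[ℝ] E x)) Ω ↔
        ((𝒢.IsUnitalQ C ΔC ∧ 𝒢.IsFlatQ C ΔC) ∧ (𝒢.IsUnitalQ E ΔE ∧ 𝒢.IsFlatQ E ΔE) ∧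
          ∀ (g₀ g₁ g₂ : G) (h₀ : 𝒢.src g₀ = 𝒢.tgt g₁) (h₁ : 𝒢.src g₁ = 𝒢.tgt g₂),
            𝒢.transD2 E C ΔC ΔE Ω g₀ g₁ g₂ h₀ h₁ = 0))) ∧
    -- (2) the operators of two type-0 tuples are conjugate by some `1 + σ̂`
    -- iff the quasi-actions agree and `Ω̃ = Ω - Dσ` for some normalized σ:
    (∀ (ΔC Δ'C : 𝒢.QAct C) (ΔE Δ'E : 𝒢.QAct E) (Ω Ω' : 𝒢.Omega2 E C),
      𝒢.IsRepHtpyTuple E C ΔC ΔE (fun x => (0 : C x →ₗ[ℝ] E x)) Ω →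
      𝒢.IsRepHtpyTuple E C Δ'C Δ'E (fun x => (0 : C x →ₗ[ℝ] E x)) Ω' →
      ((∃ σ : 𝒢.Sigma1 E C, 𝒢.IsNormalizedSigma E C σ ∧
          (∀ α, 𝒢.tupleOpNeg E C Δ'C (fun x => (0 : C x →ₗ[ℝ] E x)) α =
            𝒢.oneMinusSigma E C σ 0
              (𝒢.tupleOpNeg E C ΔC (fun x => (0 : C x →ₗ[ℝ] E x)) α)) ∧
          (∀ p ωα, 𝒢.tupleOpPos E C Δ'C Δ'E (fun x => (0 : C x →ₗ[ℝ] E x)) Ω' p ωα =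
            𝒢.oneMinusSigma E C σ (p+1)
              (𝒢.tupleOpPos E C ΔC ΔE (fun x => (0 : C x →ₗ[ℝ] E x)) Ω p
                (𝒢.onePlusSigma E C σ p ωα)))) ↔
        (Δ'C = ΔC ∧ Δ'E = ΔE ∧
          ∃ σ : 𝒢.Sigma1 E C, 𝒢.IsNormalizedSigma E C σ ∧
            ∀ (g₀ g₁ : G) (h : 𝒢.src g₀ = 𝒢.tgt g₁),
              Ω' g₀ g₁ h = Ω g₀ g₁ h - 𝒢.transD1 E C ΔC ΔE σ g₀ g₁ h))) := by
  refine ⟨fun ΔC ΔE Ω huC huE hΩ => 𝒢.isRepHtpyTuple_zero_iff E C huC huE hΩ, ?_⟩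
  intro ΔC Δ'C ΔE Δ'E Ω Ω' _ _
  constructor
  · rintro ⟨σ, hσ, hneg, hpos⟩
    obtain ⟨rfl, rfl, rfl⟩ := 𝒢.tupleOp_injective E C _
      (fun α => (hneg α).trans (𝒢.tupleOpNeg_conj E C ΔC σ α))
      (fun ωα => (hpos 0 ωα).trans (𝒢.tupleOpPos_conj E C ΔC ΔE Ω σ 0 ωα))
    exact ⟨rfl, rfl, σ, hσ, fun _ _ _ => rfl⟩
  · rintro ⟨rfl, rfl, σ, hσ, hΩ'⟩
    obtain rfl : Ω' = fun g₀ g₁ h => Ω g₀ g₁ h - 𝒢.transD1 E C Δ'C Δ'E σ g₀ g₁ h :=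
      funext fun g₀ => funext fun g₁ => funext (hΩ' g₀ g₁)
    exact ⟨σ, hσ, fun α => (𝒢.tupleOpNeg_conj E C Δ'C σ α).symm,
      fun p ωα => (𝒢.tupleOpPos_conj E C Δ'C Δ'E Ω σ p ωα).symm⟩

end SetGroupoid
end
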